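/- Let r ≥ 3, let F be a family of k-element subsets of [n] = {1,…,n} containing no 1-focal family of size r, and let m = ⌈(r−2)k/(r−1)⌉. Then for every A ∈ F, the number of m-element subsets S ⊆ A that are own-subsets of A (i.e., S ⊄ B for every B ∈ F with B ≠ A) is at least (1/(r−1))·C(k, m), where C(k, m) is the binomial coefficient. -/

import Mathlib

/-!
Passing to complements in `A`, an `m`-subset `S ⊆ A` fails to be an own-subset exactly when
`T = A \ S`, a set of size `t = k - m`, contains `A \ B` for some other `B ∈ F`. If `r - 1`
pairwise disjoint `t`-subsets of `A` all had this property, the witnessing sets `B` would be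
distinct and form, together with the focus `A`, a 1-focal family of size `r`. The choice of `m`
gives `(r - 1) t ≤ k`, so tuples of `r - 1` pairwise disjoint `t`-subsets of `A` exist, and each
coordinate of a uniformly random such tuple is a uniformly random `t`-subset; as every tuple has a
good coordinate, at most a fraction `(r - 2)/(r - 1)` of the `t`-subsets are bad.
-/

/-- A family consisting of a focus set `A₀` and `m` further sets `As 0, …, As (m-1)`
(viewed as subsets of `[n]`, i.e. characteristic vectors in `{0,1}^n`) is *1-focal with
focus `A₀`* if for every `i ∈ A₀`, at most one of the sets `As j` misses `i`
(equivalently, at least `m - 1` of the `m` characteristic-vector entries equal `1`). -/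
def IsOneFocalWithFocus {n m : ℕ} (A₀ : Finset (Fin n)) (As : Fin m → Finset (Fin n)) : Prop :=
  ∀ i ∈ A₀, ∀ j j' : Fin m, i ∉ As j → i ∉ As j' → j = j'

/-- A family `F` of subsets of `[n]` contains a 1-focal family of size `r` if some `r`
distinct members `A₀, As 0, …, As (r-2)` of `F` are 1-focal with focus `A₀`. -/
def ContainsOneFocalFamily {n : ℕ} (F : Finset (Finset (Fin n))) (r : ℕ) : Prop :=
  ∃ A₀ ∈ F, ∃ As : Fin (r - 1) → Finset (Fin n),
    (∀ j, As j ∈ F) ∧ Function.Injective As ∧ (∀ j, As j ≠ A₀) ∧ IsOneFocalWithFocus A₀ As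

open Finset Function

lemma pairwise_disjoint_insertNth {β : Type*} [PartialOrder β] [OrderBot β] {c : ℕ}
    {j : Fin (c + 1)} {T : β} {g : Fin c → β} :
    Pairwise (Disjoint on Fin.insertNth j T g) ↔
      (∀ i, Disjoint T (g i)) ∧ Pairwise (Disjoint on g) := by
  constructor
  · intro h
    refine ⟨fun i => ?_, fun i i' hii' => ?_⟩
    · simpa [onFun] using h (Fin.succAbove_ne j i).symm
    · simpa [onFun] using h ((Fin.succAbove_right_injective (p := j)).ne hii')
  · rintro ⟨hT, hg⟩ a b hab
    rcases Fin.eq_self_or_eq_succAbove j a with ha | ⟨a, rfl⟩ <;>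
      rcases Fin.eq_self_or_eq_succAbove j b with hb | ⟨b, rfl⟩
    · exact absurd (ha.trans hb.symm) hab
    · simpa [onFun, ha] using hT b
    · simpa [onFun, hb] using (hT a).symm
    · simpa [onFun] using hg (ne_of_apply_ne _ hab)

section DisjointTuples

variable {α : Type*} [DecidableEq α]

def disjointTuples (X : Finset α) (t c : ℕ) : Finset (Fin c → Finset α) :=
  {f ∈ Fintype.piFinset fun _ => X.powersetCard t | ∀ i j, i ≠ j → Disjoint (f i) (f j)}

lemma mem_disjointTuples {X : Finset α} {t c : ℕ} {f : Fin c → Finset α} :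
    f ∈ disjointTuples X t c ↔
      (∀ i, f i ∈ X.powersetCard t) ∧ Pairwise (Disjoint on f) := by
  rw [disjointTuples, mem_filter, Fintype.mem_piFinset]
  rfl

lemma card_filter_disjointTuples_apply_eq {X T : Finset α} {t c : ℕ}
    (hT : T ∈ X.powersetCard t) (j : Fin (c + 1)) :
    #{f ∈ disjointTuples X t (c + 1) | f j = T} = #(disjointTuples (X \ T) t c) := by
  obtain ⟨hTX, hTt⟩ := mem_powersetCard.1 hT
  symm
  refine card_nbij' (fun g => Fin.insertNth j T g) (fun f => Fin.removeNth j f)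
    (fun g hg => ?_) (fun f hf => ?_) (fun g _ => by simp) (fun f hf => ?_)
  · obtain ⟨hgX, hg⟩ := mem_disjointTuples.1 hg
    simp only [coe_filter, Set.mem_ofPred_eq, Fin.insertNth_apply_same, and_true,
      mem_disjointTuples, pairwise_disjoint_insertNth]
    refine ⟨fun i => ?_, fun i => ?_, hg⟩
    · rcases Fin.eq_self_or_eq_succAbove j i with rfl | ⟨i, rfl⟩
      · simpa using hT
      · simpa using mem_powersetCard.2 ⟨(mem_powersetCard.1 (hgX i)).1.trans sdiff_subset,
          (mem_powersetCard.1 (hgX i)).2⟩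
    · exact disjoint_sdiff.mono_right (mem_powersetCard.1 (hgX i)).1
  · obtain ⟨hfX, hfj⟩ := mem_filter.1 hf
    obtain ⟨hfX, hf⟩ := mem_disjointTuples.1 hfX
    rw [← Fin.insertNth_self_removeNth j f, hfj, pairwise_disjoint_insertNth] at hf
    refine mem_disjointTuples.2 ⟨fun i => mem_powersetCard.2 ⟨?_, ?_⟩, hf.2⟩
    · exact subset_sdiff.2 ⟨(mem_powersetCard.1 (hfX _)).1, (hf.1 i).symm⟩
    · exact (mem_powersetCard.1 (hfX _)).2
  · rw [← (mem_filter.1 hf).2]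
    exact Fin.insertNth_self_removeNth j f

lemma card_disjointTuples (X : Finset α) (t c : ℕ) :
    #(disjointTuples X t c) = ∏ i ∈ range c, (#X - t * i).choose t := by
  induction c generalizing X with
  | zero => simp [disjointTuples]
  | succ c ih =>
    have hfiber : ∀ T ∈ X.powersetCard t, #{f ∈ disjointTuples X t (c + 1) | f 0 = T} =
        ∏ i ∈ range c, (#X - t * (i + 1)).choose t := by
      intro T hT
      obtain ⟨hTX, hTt⟩ := mem_powersetCard.1 hT
      simp only [card_filter_disjointTuples_apply_eq hT, ih, card_sdiff_of_subset hTX, hTt,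
        Nat.sub_sub, mul_add_one, add_comm]
    rw [card_eq_sum_card_fiberwise fun f hf => (mem_disjointTuples.1 hf).1 0,
      sum_congr rfl hfiber, sum_const, card_powersetCard, smul_eq_mul, prod_range_succ']
    simp [mul_comm]

lemma card_filter_disjointTuples_apply_mem {X : Finset α} {t c : ℕ} {𝒜 : Finset (Finset α)}
    (h𝒜 : 𝒜 ⊆ X.powersetCard t) (j : Fin (c + 1)) :
    #{f ∈ disjointTuples X t (c + 1) | f j ∈ 𝒜} =
      #𝒜 * ∏ i ∈ range c, (#X - t * (i + 1)).choose t := by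
  have hfiber : ∀ T ∈ 𝒜,
      #{f ∈ {f ∈ disjointTuples X t (c + 1) | f j ∈ 𝒜} | f j = T} =
        ∏ i ∈ range c, (#X - t * (i + 1)).choose t := by
    intro T hT
    obtain ⟨hTX, hTt⟩ := mem_powersetCard.1 (h𝒜 hT)
    rw [filter_filter, filter_congr fun f _ => and_iff_right_of_imp fun h => h ▸ hT,
      card_filter_disjointTuples_apply_eq (h𝒜 hT), card_disjointTuples,
      card_sdiff_of_subset hTX, hTt]
    simp only [Nat.sub_sub, mul_add_one, add_comm]
  rw [card_eq_sum_card_fiberwise (s := {f ∈ disjointTuples X t (c + 1) | f j ∈ 𝒜})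
      (f := fun f => f j) (t := 𝒜) fun f hf => (mem_filter.1 hf).2,
    sum_congr rfl hfiber, sum_const, smul_eq_mul]

/-- A weak form of the Erdős matching bound. -/
theorem mul_card_le_of_forall_disjointTuples {X : Finset α} {t c : ℕ} {𝒜 : Finset (Finset α)}
    (h𝒜 : 𝒜 ⊆ X.powersetCard t) (hX : t * (c + 1) ≤ #X)
    (hmatch : ∀ f ∈ disjointTuples X t (c + 1), ∃ j, f j ∉ 𝒜) :
    (c + 1) * #𝒜 ≤ c * (#X).choose t := by
  set D := disjointTuples X t (c + 1)
  set N := ∏ i ∈ range c, (#X - t * (i + 1)).choose t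
  have hN : 0 < N := prod_pos fun i hi => Nat.choose_pos <| by
    have : t * (i + 1) ≤ t * c := Nat.mul_le_mul_left t (mem_range.1 hi)
    rw [Nat.mul_succ] at hX
    omega
  have hD : #D = (#X).choose t * N := by
    simp [D, N, card_disjointTuples, prod_range_succ', mul_comm]
  have hfew : ∀ f ∈ D, #{j | f j ∈ 𝒜} ≤ c := fun f hf => by
    obtain ⟨j, hj⟩ := hmatch f hf
    simpa using card_lt_card (filter_ssubset.2 ⟨j, mem_univ j, hj⟩)
  refine Nat.le_of_mul_le_mul_right ?_ hN
  calc (c + 1) * #𝒜 * N = ∑ j : Fin (c + 1), #{f ∈ D | f j ∈ 𝒜} := by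
        simp [card_filter_disjointTuples_apply_mem h𝒜, D, N, mul_assoc]
    _ = ∑ f ∈ D, #{j | f j ∈ 𝒜} := by
        simp only [card_filter]
        exact sum_comm
    _ ≤ ∑ _f ∈ D, c := sum_le_sum hfew
    _ = c * (#X).choose t * N := by rw [sum_const, smul_eq_mul, hD]; ring

end DisjointTuples

lemma card_filter_powersetCard_eq_card_filter_sdiff {α : Type*} [DecidableEq α]
    {A : Finset α} {m : ℕ} (hm : m ≤ #A) (p : Finset α → Prop) [DecidablePred p] :
    #{S ∈ A.powersetCard m | p S} = #{T ∈ A.powersetCard (#A - m) | p (A \ T)} := by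
  refine card_nbij' (A \ ·) (A \ ·) (fun S hS => ?_) (fun T hT => ?_) (fun S hS => ?_)
    (fun T hT => ?_) <;> simp only [coe_filter, Set.mem_ofPred_eq, mem_powersetCard] at *
  · rw [Finset.sdiff_sdiff_eq_self hS.1.1, card_sdiff_of_subset hS.1.1, hS.1.2]
    exact ⟨⟨sdiff_subset, rfl⟩, hS.2⟩
  · rw [card_sdiff_of_subset hT.1.1, hT.1.2]
    exact ⟨⟨sdiff_subset, by omega⟩, hT.2⟩
  · exact Finset.sdiff_sdiff_eq_self hS.1.1
  · exact Finset.sdiff_sdiff_eq_self hT.1.1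

lemma ceil_mul_div_succ_le (c k : ℕ) : ⌈(c * k : ℚ) / (c + 1)⌉₊ ≤ k := by
  rw [Nat.ceil_le, div_le_iff₀ (by positivity)]
  nlinarith

lemma sub_ceil_mul_div_succ_mul_le (c k : ℕ) :
    (k - ⌈(c * k : ℚ) / (c + 1)⌉₊) * (c + 1) ≤ k := by
  have hceil := Nat.le_ceil ((c * k : ℚ) / (c + 1))
  rw [div_le_iff₀ (by positivity)] at hceil
  rw [← Nat.cast_le (α := ℚ)]
  push_cast [Nat.cast_sub (ceil_mul_div_succ_le c k)]
  linarith

lemma containsOneFocalFamily_of_sdiff_subset {n c : ℕ} {F : Finset (Finset (Fin n))}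
    {A : Finset (Fin n)} (hA : A ∈ F) (hAmax : ∀ B ∈ F, A ⊆ B → B = A)
    {f : Fin (c + 1) → Finset (Fin n)} (hf : Pairwise (Disjoint on f))
    (hB : ∀ j, ∃ B ∈ F, B ≠ A ∧ A \ B ⊆ f j) :
    ContainsOneFocalFamily F (c + 2) := by
  choose B hBF hBA hBf using hB
  refine ⟨A, hA, B, hBF, fun i j hij => ?_, hBA, fun x hx i j hxi hxj => ?_⟩
  · by_contra hne
    have hAB : A \ B i = ∅ := eq_empty_of_forall_notMem fun x hx =>
      disjoint_left.1 (hf hne) (hBf i hx) (hBf j (hij ▸ hx))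
    exact hBA i (hAmax _ (hBF i) (sdiff_eq_empty_iff_subset.1 hAB))
  · by_contra hne
    exact disjoint_left.1 (hf hne) (hBf i (mem_sdiff.2 ⟨hx, hxi⟩))
      (hBf j (mem_sdiff.2 ⟨hx, hxj⟩))

/-- If `F` is a family of `k`-element subsets of `[n]` with no 1-focal family of size `r`
and `m = ⌈(r-2)k/(r-1)⌉`, then for every `A ∈ F` the number of `m`-element subsets of `A`
that are own-subsets of `A` (contained in no other member of `F`) is at least
`(1/(r-1))·C(k,m)`. -/
theorem own_subsets_lower_bound (r n k : ℕ) (hr : 3 ≤ r)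
    (F : Finset (Finset (Fin n))) (hunif : ∀ A ∈ F, A.card = k)
    (hF : ¬ ContainsOneFocalFamily F r)
    (m : ℕ) (hm : m = ⌈(((r : ℚ) - 2) * k) / ((r : ℚ) - 1)⌉₊)
    (A : Finset (Fin n)) (hA : A ∈ F) :
    (1 / ((r : ℝ) - 1)) * (k.choose m : ℝ) ≤
      (((A.powersetCard m).filter (fun S => ∀ B ∈ F, B ≠ A → ¬ S ⊆ B)).card : ℝ) := by
  obtain ⟨c, rfl⟩ : ∃ c, r = c + 2 := ⟨r - 2, by omega⟩
  replace hm : m = ⌈(c * k : ℚ) / (c + 1)⌉₊ := by rw [hm]; push_cast; ring_nf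
  have hk : #A = k := hunif A hA
  have hmk : m ≤ k := hm ▸ ceil_mul_div_succ_le c k
  set 𝒜 := {T ∈ A.powersetCard (k - m) | ∃ B ∈ F, B ≠ A ∧ A \ B ⊆ T}
  set 𝒢 := {T ∈ A.powersetCard (k - m) | ¬ ∃ B ∈ F, B ≠ A ∧ A \ B ⊆ T}
  have hown : #{S ∈ A.powersetCard m | ∀ B ∈ F, B ≠ A → ¬ S ⊆ B} = #𝒢 := by
    rw [card_filter_powersetCard_eq_card_filter_sdiff (hk ▸ hmk), hk]
    refine congrArg card (filter_congr fun T _ => ?_)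
    simp only [not_exists, not_and]
    exact forall₂_congr fun B _ => imp_congr_right fun _ => not_congr sdiff_le_comm
  have hbad : (c + 1) * #𝒜 ≤ c * (#A).choose (k - m) := by
    refine mul_card_le_of_forall_disjointTuples (filter_subset _ _) ?_ fun f hf => ?_
    · rw [hk, hm]
      exact sub_ceil_mul_div_succ_mul_le c k
    · by_contra! hall
      exact hF (containsOneFocalFamily_of_sdiff_subset hA
        (fun B hB hAB => (eq_of_subset_of_card_le hAB (by rw [hunif B hB, hk])).symm)
        (mem_disjointTuples.1 hf).2 fun j => (mem_filter.1 (hall j)).2)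
  have hsplit : #𝒜 + #𝒢 = k.choose m := by
    rw [card_filter_add_card_filter_not, card_powersetCard, hk, Nat.choose_symm hmk]
  rw [hk, Nat.choose_symm hmk] at hbad
  have hgood : (k.choose m : ℝ) ≤ (c + 1) * #𝒢 := by exact_mod_cast (by nlinarith)
  rw [hown, div_mul_eq_mul_div, one_mul, div_le_iff₀ (by push_cast; linarith)]
  push_cast
  linarith
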